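/- Let H be a complex Hilbert space, let B and T be bounded linear operators on H, and let 0 < α ≤ 1. Then |BT|^α ≤ ‖B‖^α · |T|^α in the Loewner order on bounded self-adjoint operators, where |X| denotes the positive square root of X*X and the power α is taken via the continuous functional calculus of the positive operator. -/

import Mathlib

/-!
Conjugating `star B * B ≤ ‖B‖²` by `T` gives `|BT|² ≤ ‖B‖² |T|²`, hence `|BT| ≤ ‖B‖ |T|` by
operator monotonicity of the square root; operator monotonicity of `x ↦ x ^ α` for `0 ≤ α ≤ 1`
(the Löwner–Heinz inequality) then yields the claim.
-/

namespace CFC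

lemma abs_mul_le_norm_smul_abs {A : Type*} [NonUnitalCStarAlgebra A] [PartialOrder A]
    [StarOrderedRing A] (b t : A) : abs (b * t) ≤ ‖b‖ • abs t := by
  have hsq : star (b * t) * (b * t) ≤ star (‖b‖ • t) * (‖b‖ • t) :=
    calc star (b * t) * (b * t) = star t * (star b * b) * t := by
          simp only [star_mul, mul_assoc]
      _ ≤ ‖star b * b‖ • (star t * t) := CStarAlgebra.star_left_conjugate_le_norm_smul
      _ = star (‖b‖ • t) * (‖b‖ • t) := by
          rw [CStarRing.norm_star_mul_self, star_smul, smul_mul_smul_comm, star_trivial ‖b‖]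
  calc abs (b * t) ≤ abs (‖b‖ • t) := sqrt_le_sqrt _ _ hsq
    _ = ‖b‖ • abs t := by rw [abs_smul, norm_norm]

lemma smul_rpow {A : Type*} [CStarAlgebra A] [PartialOrder A] [StarOrderedRing A]
    {r : ℝ} {a : A} {p : ℝ} (hr : 0 ≤ r) (ha : 0 ≤ a) (hp : 0 ≤ p) :
    (r • a) ^ p = r ^ p • a ^ p := by
  have hcont : Continuous fun x : ℝ => x ^ p := Real.continuous_rpow_const hp
  rw [rpow_eq_cfc_real (smul_nonneg hr ha), rpow_eq_cfc_real ha,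
    ← cfc_comp_const_mul r (fun x : ℝ => x ^ p) a hcont.continuousOn,
    ← cfc_const_mul _ _ a hcont.continuousOn]
  exact cfc_congr fun x hx => Real.mul_rpow hr (spectrum_nonneg_of_nonneg ha hx)

end CFC

theorem abs_comp_rpow_le
    {H : Type*} [NormedAddCommGroup H] [InnerProductSpace ℂ H] [CompleteSpace H]
    (B T : H →L[ℂ] H) (α : ℝ) (hα0 : 0 < α) (hα1 : α ≤ 1) :
    cfc (fun x : ℝ => x ^ α) (CFC.sqrt (star (B * T) * (B * T))) ≤
      ‖B‖ ^ α • cfc (fun x : ℝ => x ^ α) (CFC.sqrt (star T * T)) := by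
  have h := CFC.rpow_le_rpow ⟨hα0.le, hα1⟩ (CFC.abs_mul_le_norm_smul_abs B T)
  rwa [CFC.smul_rpow (norm_nonneg B) (CFC.abs_nonneg T) hα0.le,
    CFC.rpow_eq_cfc_real (CFC.abs_nonneg _), CFC.rpow_eq_cfc_real (CFC.abs_nonneg _)] at h
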